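/- arXiv:2109.02863 — 2 statements merged into one kernel-verified Lean document; each statement's English description precedes it below -/
import Mathlib

section
/- Let A = V + N where V = WH is an r-separable nonnegative d×n matrix with H = [I, H̄]Π for a permutation matrix Π, all columns of V, W, H have unit L1 norm, and ||N||_1 ≤ ε. Define X_0 = Π^{-1} [[I, H̄],[0, 0]] Π ∈ ℝ^{n×n}. Then V X_0 = V and ||A − A X_0||_1 ≤ 2ε. -/
noncomputable section
open Matrix
open scoped Classical

/-- Entrywise L1 norm of a vector. -/
def l1 {α : Type*} [Fintype α] (v : α → ℝ) : ℝ := ∑ i, |v i|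

/-- Induced L1 norm of a matrix (maximum column sum of absolute values). -/
def ml1 {α β : Type*} [Fintype α] [Fintype β] (M : Matrix α β ℝ) : ℝ :=
  sSup (Set.range fun j => ∑ i, |M i j|)

/-- Feasible set of problem P(A,r). -/
def Feas {ι : Type*} [Fintype ι] [DecidableEq ι] (X : Matrix ι ι ℝ) (r : ℕ) : Prop :=
  Matrix.trace X = (r : ℝ) ∧ (∀ i, X i i ≤ 1) ∧ (∀ i j, 0 ≤ X i j) ∧
    (∀ i j, X i j ≤ X i i)

/-- κ(W) = min over j of min over nonnegative z (supported off j) of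
    ‖w_j − W(:,R∖{j}) z‖₁. -/
def kappa {d r : ℕ} (W : Matrix (Fin d) (Fin r) ℝ) : ℝ :=
  sInf {c | ∃ (j : Fin r) (z : Fin r → ℝ), (∀ k, 0 ≤ z k) ∧ z j = 0 ∧
    c = l1 (fun i => W i j - ∑ k, W i k * z k)}

/-- ω(W) = min over distinct pairs of ‖w_{j₁} − w_{j₂}‖₁. -/
def omegaW {d r : ℕ} (W : Matrix (Fin d) (Fin r) ℝ) : ℝ :=
  sInf {c | ∃ j₁ j₂ : Fin r, j₁ ≠ j₂ ∧ c = l1 (fun i => W i j₁ - W i j₂)}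

/-- β = maximum entry of H̄. -/
def betaH {r m : ℕ} (Hb : Matrix (Fin r) (Fin m) ℝ) : ℝ :=
  sSup (Set.range fun p : Fin r × Fin m => Hb p.1 p.2)

/-! Up to the permutation, `X₀` is `P = [I, H̄]` stacked over a zero block, and
`P [P; 0] = I P + H̄ 0 = P`. Hence `H X₀ = H`, so `V X₀ = V` and `A - A X₀ = N - N X₀`. The columns
of `X₀` are those of `H` padded with zeros, so `‖X₀‖₁ ≤ 1`, and submultiplicativity of the induced
L1 norm gives `‖N - N X₀‖₁ ≤ (1 + ‖X₀‖₁) ‖N‖₁ ≤ 2ε`. -/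

section ml1

variable {α α' β β' γ : Type*} [Fintype α] [Fintype α'] [Fintype β] [Fintype β'] [Fintype γ]

section linfty

attribute [local instance] Matrix.linftyOpNormedAddCommGroup

theorem ml1_eq_norm_transpose (M : Matrix α β ℝ) : ml1 M = ‖Mᵀ‖ := by
  have hcol (j : β) : ∑ i, |M i j| = ((∑ i, ‖Mᵀ j i‖₊ : NNReal) : ℝ) := by push_cast; rfl
  rw [linfty_opNorm_def]
  apply le_antisymm
  · refine Real.sSup_le ?_ (by positivity)
    rintro _ ⟨j, rfl⟩
    exact (hcol j).trans_le <| NNReal.coe_le_coe.2 <|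
      Finset.le_sup (f := fun j => ∑ i, ‖Mᵀ j i‖₊) (Finset.mem_univ j)
  · rcases Finset.univ.eq_empty_or_nonempty (α := β) with h | h
    · simp only [h, Finset.sup_empty]
      exact Real.sSup_nonneg (by rintro _ ⟨j, rfl⟩; positivity)
    · obtain ⟨j, -, hj⟩ := Finset.exists_mem_eq_sup _ h (fun j => ∑ i, ‖Mᵀ j i‖₊)
      rw [hj, ← hcol]
      exact le_csSup (Set.finite_range _).bddAbove ⟨j, rfl⟩

theorem ml1_nonneg (M : Matrix α β ℝ) : 0 ≤ ml1 M := by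
  rw [ml1_eq_norm_transpose]
  exact norm_nonneg _

theorem ml1_sub_le (M M' : Matrix α β ℝ) : ml1 (M - M') ≤ ml1 M + ml1 M' := by
  simpa only [ml1_eq_norm_transpose, transpose_sub] using norm_sub_le Mᵀ M'ᵀ

theorem ml1_mul_le (M : Matrix α β ℝ) (M' : Matrix β γ ℝ) : ml1 (M * M') ≤ ml1 M * ml1 M' := by
  simpa only [ml1_eq_norm_transpose, transpose_mul, mul_comm] using linfty_opNorm_mul M'ᵀ Mᵀ

end linfty

theorem ml1_le_of_forall_l1_le {M : Matrix α β ℝ} {c : ℝ} (hc : 0 ≤ c)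
    (h : ∀ j, l1 (fun i => M i j) ≤ c) : ml1 M ≤ c :=
  Real.sSup_le (by rintro _ ⟨j, rfl⟩; exact h j) hc

theorem ml1_submatrix_equiv (M : Matrix α β ℝ) (e₁ : α' ≃ α) (e₂ : β' ≃ β) :
    ml1 (M.submatrix e₁ e₂) = ml1 M := by
  have hcol : (fun j' => ∑ i', |M.submatrix e₁ e₂ i' j'|) = (fun j => ∑ i, |M i j|) ∘ e₂ :=
    funext fun j' => e₁.sum_comp fun i => |M i (e₂ j')|
  rw [ml1, ml1, hcol, EquivLike.range_comp]

theorem ml1_fromRows_zero (M : Matrix α β ℝ) : ml1 (fromRows M (0 : Matrix γ β ℝ)) = ml1 M := by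
  simp [ml1, Fintype.sum_sum_type]

theorem ml1_sub_mul_le (N : Matrix α β ℝ) (X : Matrix β β ℝ) :
    ml1 (N - N * X) ≤ (1 + ml1 X) * ml1 N :=
  calc ml1 (N - N * X) ≤ ml1 N + ml1 N * ml1 X :=
        (ml1_sub_le _ _).trans (add_le_add le_rfl (ml1_mul_le _ _))
    _ = (1 + ml1 X) * ml1 N := by ring

end ml1

theorem Matrix.fromCols_one_mul_fromRows_self {R : Type*} [Semiring R] {n m : Type*} [Fintype n]
    [DecidableEq n] [Fintype m] (B : Matrix n m R) :
    fromCols (1 : Matrix n n R) B * fromRows (fromCols 1 B) (0 : Matrix m (n ⊕ m) R) =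
      fromCols 1 B := by
  rw [fromCols_mul_fromRows, Matrix.one_mul, Matrix.mul_zero, add_zero]

theorem VX0_eq_and_noise_bound_general
    {d r m : ℕ} (W : Matrix (Fin d) (Fin r) ℝ) (Hbar : Matrix (Fin r) (Fin m) ℝ)
    (σ : Equiv.Perm (Fin r ⊕ Fin m))
    (N A V : Matrix (Fin d) (Fin r ⊕ Fin m) ℝ)
    (H : Matrix (Fin r) (Fin r ⊕ Fin m) ℝ) (ε : ℝ)
    (hH : H = fun j u => Matrix.fromCols (1 : Matrix (Fin r) (Fin r) ℝ) Hbar j (σ u))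
    (hV : V = W * H) (hA : A = V + N)
    (hHcol : ∀ u, l1 (fun j => H j u) = 1)
    (hN : ml1 N ≤ ε)
    (X0 : Matrix (Fin r ⊕ Fin m) (Fin r ⊕ Fin m) ℝ)
    (hX0 : X0 = fun u v =>
      Matrix.fromBlocks (1 : Matrix (Fin r) (Fin r) ℝ) Hbar
        (0 : Matrix (Fin m) (Fin r) ℝ) (0 : Matrix (Fin m) (Fin m) ℝ) (σ u) (σ v)) :
    V * X0 = V ∧ ml1 (A - A * X0) ≤ 2 * ε := by
  have hHP : H = (fromCols 1 Hbar).submatrix id σ := hH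
  have hX0P : X0 = (fromRows (fromCols 1 Hbar) 0).submatrix σ σ := by
    rw [hX0, ← fromRows_fromCols_eq_fromBlocks, fromCols_zero]; rfl
  have hVX0 : V * X0 = V := by
    rw [hV, Matrix.mul_assoc, hHP, hX0P, submatrix_mul_equiv, fromCols_one_mul_fromRows_self]
  have hX0_norm : ml1 X0 ≤ 1 := by
    rw [hX0P, ml1_submatrix_equiv, ml1_fromRows_zero,
      ← ml1_submatrix_equiv (fromCols 1 Hbar) (Equiv.refl _) σ, Equiv.coe_refl, ← hHP]
    exact ml1_le_of_forall_l1_le zero_le_one fun u => (hHcol u).le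
  refine ⟨hVX0, ?_⟩
  have hres : A - A * X0 = N - N * X0 := by
    rw [hA, Matrix.add_mul, hVX0]; abel
  calc ml1 (A - A * X0) = ml1 (N - N * X0) := by rw [hres]
    _ ≤ (1 + ml1 X0) * ml1 N := ml1_sub_mul_le N X0
    _ ≤ (1 + 1) * ε := by gcongr; exact ml1_nonneg N
    _ = 2 * ε := by ring

/-- With X₀ = Π⁻¹ [[I,H̄],[0,0]] Π, one has V X₀ = V and ‖A − A X₀‖₁ ≤ 2ε. -/
theorem VX0_eq_and_noise_bound
    {d r m : ℕ} (W : Matrix (Fin d) (Fin r) ℝ) (Hbar : Matrix (Fin r) (Fin m) ℝ)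
    (σ : Equiv.Perm (Fin r ⊕ Fin m))
    (N A V : Matrix (Fin d) (Fin r ⊕ Fin m) ℝ)
    (H : Matrix (Fin r) (Fin r ⊕ Fin m) ℝ) (ε : ℝ)
    (hW : ∀ i j, 0 ≤ W i j) (hHbar : ∀ i j, 0 ≤ Hbar i j)
    (hH : H = fun j u => Matrix.fromCols (1 : Matrix (Fin r) (Fin r) ℝ) Hbar j (σ u))
    (hV : V = W * H) (hA : A = V + N)
    (hVcol : ∀ u, l1 (fun i => V i u) = 1)
    (hWcol : ∀ j, l1 (fun i => W i j) = 1)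
    (hHcol : ∀ u, l1 (fun j => H j u) = 1)
    (hε0 : 0 ≤ ε) (hε1 : ε < 1) (hN : ml1 N ≤ ε)
    (X0 : Matrix (Fin r ⊕ Fin m) (Fin r ⊕ Fin m) ℝ)
    (hX0 : X0 = fun u v =>
      Matrix.fromBlocks (1 : Matrix (Fin r) (Fin r) ℝ) Hbar
        (0 : Matrix (Fin m) (Fin r) ℝ) (0 : Matrix (Fin m) (Fin m) ℝ) (σ u) (σ v)) :
    V * X0 = V ∧ ml1 (A - A * X0) ≤ 2 * ε :=
  VX0_eq_and_noise_bound_general W Hbar σ N A V H ε hH hV hA hHcol hN X0 hX0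
end
end

section
/- Under Assumption 1, assume κ > 0 and β < 1, where κ is the conical margin parameter of W and β = max entry of H̄. Let I be a set of basis indices of V and p = diag(X_opt) for an optimal solution X_opt of P(A,r). Then p(i) ≥ 1 − 8ε/(κ(1−β)(1−ε)) for every i ∈ I. -/
/-!
The matrix `X₀` that keeps the basis columns and rewrites every column of `V = W H` through
them is feasible with `V X₀ = V`, so the optimal residual is at most `‖N - N X₀‖₁ ≤ 2ε`.
Let `x` be the column of `X_opt` at the basis index `φ(j)` and `S` its mass. Since `A x` is
within `2ε` of `a_{φ(j)} = w_j + n_{φ(j)}`, the mass satisfies `(1 - ε) S ≤ 1 + 3ε`, and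
`W (H x)` is within `3ε + εS` of `w_j`. The conical margin then forces
`κ (1 - (H x)_j) ≤ 3ε + εS`, while every column of `H` other than `e_j` puts weight at most `β`
on `w_j`, so `(H x)_j ≤ x_{φ(j)} + β (S - x_{φ(j)})`. Eliminating `(H x)_j` and `S` bounds the
diagonal entry `x_{φ(j)}`.
-/

noncomputable section
open Matrix
open scoped Classical

section L1

variable {α β : Type*} [Fintype α] [Fintype β]

lemma l1_nonneg (v : α → ℝ) : 0 ≤ l1 v :=
  Finset.sum_nonneg fun _ _ => abs_nonneg _

lemma l1_add_le (v w : α → ℝ) : l1 (v + w) ≤ l1 v + l1 w := by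
  rw [l1, l1, l1, ← Finset.sum_add_distrib]
  exact Finset.sum_le_sum fun i _ => abs_add_le _ _

lemma l1_sub_le (v w : α → ℝ) : l1 (v - w) ≤ l1 v + l1 w := by
  rw [l1, l1, l1, ← Finset.sum_add_distrib]
  exact Finset.sum_le_sum fun i _ => abs_sub _ _

lemma l1_smul (c : ℝ) (v : α → ℝ) : l1 (c • v) = |c| * l1 v := by
  simp only [l1, Pi.smul_apply, smul_eq_mul, abs_mul, Finset.mul_sum]

lemma l1_eq_sum_of_nonneg {v : α → ℝ} (hv : ∀ i, 0 ≤ v i) : l1 v = ∑ i, v i :=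
  Finset.sum_congr rfl fun i _ => abs_of_nonneg (hv i)

lemma l1_col_le_ml1 (M : Matrix α β ℝ) (j : β) : l1 (fun i => M i j) ≤ ml1 M :=
  le_csSup (Set.finite_range _).bddAbove ⟨j, rfl⟩

lemma ml1_le [Nonempty β] {M : Matrix α β ℝ} {c : ℝ} (h : ∀ j, l1 (fun i => M i j) ≤ c) :
    ml1 M ≤ c :=
  csSup_le (Set.range_nonempty _) (by rintro _ ⟨j, rfl⟩; exact h j)

lemma l1_mulVec_le {N : Matrix α β ℝ} {ε : ℝ} (hN : ml1 N ≤ ε) {x : β → ℝ}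
    (hx : ∀ u, 0 ≤ x u) : l1 (N *ᵥ x) ≤ ε * ∑ u, x u :=
  calc l1 (N *ᵥ x) ≤ ∑ i, ∑ u, |N i u| * x u :=
        Finset.sum_le_sum fun i _ => (Finset.abs_sum_le_sum_abs _ _).trans_eq <|
          Finset.sum_congr rfl fun u _ => by rw [abs_mul, abs_of_nonneg (hx u)]
    _ = ∑ u, l1 (fun i => N i u) * x u := by
        rw [Finset.sum_comm]
        simp only [l1, Finset.sum_mul]
    _ ≤ ∑ u, ε * x u := Finset.sum_le_sum fun u _ =>
        mul_le_mul_of_nonneg_right ((l1_col_le_ml1 N u).trans hN) (hx u)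
    _ = ε * ∑ u, x u := (Finset.mul_sum _ _ _).symm

lemma l1_mulVec_eq_sum_of_nonneg {V : Matrix α β ℝ} (hV : ∀ i u, 0 ≤ V i u)
    (hVcol : ∀ u, l1 (fun i => V i u) = 1) {x : β → ℝ} (hx : ∀ u, 0 ≤ x u) :
    l1 (V *ᵥ x) = ∑ u, x u := by
  rw [l1_eq_sum_of_nonneg (v := V *ᵥ x) fun i =>
    Finset.sum_nonneg fun u _ => mul_nonneg (hV i u) (hx u)]
  simp only [mulVec, dotProduct]
  rw [Finset.sum_comm]
  refine Finset.sum_congr rfl fun u _ => ?_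
  rw [← Finset.sum_mul, ← l1_eq_sum_of_nonneg (hV · u), hVcol, one_mul]

end L1

section Residual

variable {α β ρ : Type*} [Fintype α] [Fintype β] [Fintype ρ] {V N : Matrix α β ℝ} {ε : ℝ}

lemma ml1_sub_mul_le_s7 [Nonempty β] {X : Matrix β β ℝ} (hVX : V * X = V)
    (hX : ∀ u u', 0 ≤ X u u') (hXcol : ∀ u', ∑ u, X u u' = 1) (hN : ml1 N ≤ ε) :
    ml1 ((V + N) - (V + N) * X) ≤ 2 * ε := by
  have hsplit : (V + N) - (V + N) * X = N - N * X := by rw [Matrix.add_mul, hVX]; abel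
  refine hsplit ▸ ml1_le fun u' => ?_
  calc l1 (fun i => (N - N * X) i u') = l1 ((fun i => N i u') - N *ᵥ fun u => X u u') := rfl
    _ ≤ ε + ε * ∑ u, X u u' :=
        (l1_sub_le _ _).trans <| add_le_add ((l1_col_le_ml1 N u').trans hN)
          (l1_mulVec_le hN fun u => hX u u')
    _ = 2 * ε := by rw [hXcol]; ring

lemma one_sub_mul_sum_le (hV : ∀ i u, 0 ≤ V i u) (hVcol : ∀ u, l1 (fun i => V i u) = 1)
    (hN : ml1 N ≤ ε) {x : β → ℝ} (hx : ∀ u, 0 ≤ x u) {u₀ : β}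
    (hres : l1 (fun i => (V + N) i u₀ - ((V + N) *ᵥ x) i) ≤ 2 * ε) :
    (1 - ε) * ∑ u, x u ≤ 1 + 3 * ε := by
  have hlower : ∑ u, x u ≤ l1 ((V + N) *ᵥ x) + ε * ∑ u, x u :=
    calc ∑ u, x u = l1 ((V + N) *ᵥ x - N *ᵥ x) := by
          rw [add_mulVec, add_sub_cancel_right, l1_mulVec_eq_sum_of_nonneg hV hVcol hx]
      _ ≤ l1 ((V + N) *ᵥ x) + ε * ∑ u, x u :=
          (l1_sub_le _ _).trans (by grw [l1_mulVec_le hN hx])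
  have hcol : l1 (fun i => (V + N) i u₀) ≤ 1 + ε :=
    calc l1 (fun i => (V + N) i u₀) ≤ l1 (fun i => V i u₀) + l1 (fun i => N i u₀) :=
          l1_add_le _ _
      _ ≤ 1 + ε := by rw [hVcol]; grw [l1_col_le_ml1 N u₀, hN]
  have hupper : l1 ((V + N) *ᵥ x) ≤ 1 + 3 * ε :=
    calc l1 ((V + N) *ᵥ x)
        = l1 ((fun i => (V + N) i u₀) - fun i => (V + N) i u₀ - ((V + N) *ᵥ x) i) := by
          congr 1; ext i; simp
      _ ≤ (1 + ε) + 2 * ε := (l1_sub_le _ _).trans (add_le_add hcol hres)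
      _ = 1 + 3 * ε := by ring
  linarith

lemma l1_col_sub_mulVec_le {W : Matrix α ρ ℝ} {H : Matrix ρ β ℝ} {u₀ : β} {j : ρ}
    (hcol : ∀ i, (W * H) i u₀ = W i j) (hN : ml1 N ≤ ε) {x : β → ℝ} (hx : ∀ u, 0 ≤ x u)
    (hres : l1 (fun i => (W * H + N) i u₀ - ((W * H + N) *ᵥ x) i) ≤ 2 * ε) :
    l1 (fun i => W i j - (W *ᵥ H *ᵥ x) i) ≤ 3 * ε + ε * ∑ u, x u := by
  have hsplit : (fun i => W i j - (W *ᵥ H *ᵥ x) i) =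
      (fun i => (W * H + N) i u₀ - ((W * H + N) *ᵥ x) i) - (fun i => N i u₀) + N *ᵥ x := by
    ext i
    simp only [mulVec_mulVec, add_mulVec, Pi.add_apply, Pi.sub_apply, Matrix.add_apply, hcol]
    ring
  calc l1 (fun i => W i j - (W *ᵥ H *ᵥ x) i)
      ≤ l1 (fun i => (W * H + N) i u₀ - ((W * H + N) *ᵥ x) i) + l1 (fun i => N i u₀)
          + l1 (N *ᵥ x) := by
        rw [hsplit]; exact (l1_add_le _ _).trans (add_le_add (l1_sub_le _ _) le_rfl)
    _ ≤ 2 * ε + ε + ε * ∑ u, x u :=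
        add_le_add (add_le_add hres ((l1_col_le_ml1 N u₀).trans hN)) (l1_mulVec_le hN hx)
    _ = 3 * ε + ε * ∑ u, x u := by ring

end Residual

section Kappa

variable {d r : ℕ} (W : Matrix (Fin d) (Fin r) ℝ)

lemma kappa_le (j : Fin r) {z : Fin r → ℝ} (hz : ∀ k, 0 ≤ z k) (hzj : z j = 0) :
    kappa W ≤ l1 (fun i => W i j - (W *ᵥ z) i) :=
  csInf_le ⟨0, by rintro _ ⟨_, _, _, _, rfl⟩; exact l1_nonneg _⟩ ⟨j, z, hz, hzj, rfl⟩

lemma kappa_nonneg : 0 ≤ kappa W :=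
  Real.sInf_nonneg (by rintro _ ⟨_, _, _, _, rfl⟩; exact l1_nonneg _)

lemma kappa_le_l1_col (j : Fin r) : kappa W ≤ l1 (fun i => W i j) := by
  simpa using kappa_le W j (z := 0) (fun _ => le_rfl) rfl

/-- If `y j < 1`, rescaling `y` with its `j`-th entry removed by `1 / (1 - y j)` gives an
admissible point in the definition of `kappa`. -/
lemma kappa_mul_one_sub_le (j : Fin r) {y : Fin r → ℝ} (hy : ∀ k, 0 ≤ y k) :
    kappa W * (1 - y j) ≤ l1 (fun i => W i j - (W *ᵥ y) i) := by
  rcases le_or_gt 1 (y j) with h | h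
  · exact (mul_nonpos_of_nonneg_of_nonpos (kappa_nonneg W) (by linarith)).trans (l1_nonneg _)
  have hc : 0 < 1 - y j := by linarith
  set z : Fin r → ℝ := (1 - y j)⁻¹ • (y - Pi.single j (y j))
  have hz : ∀ k, 0 ≤ z k := by
    intro k
    rcases eq_or_ne k j with rfl | hk
    · simp [z]
    · simpa [z, hk] using mul_nonneg (inv_pos.2 hc).le (hy k)
  have hscale : (fun i => W i j - (W *ᵥ z) i) =
      (1 - y j)⁻¹ • fun i => W i j - (W *ᵥ y) i := by
    ext i
    simp only [z, mulVec_smul, mulVec_sub, mulVec_single, Pi.smul_apply, Pi.sub_apply, col_apply,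
      smul_eq_mul, MulOpposite.smul_eq_mul_unop, MulOpposite.unop_op]
    field_simp
    ring
  have key := kappa_le W j hz (by simp [z])
  rwa [hscale, l1_smul, abs_of_pos (inv_pos.2 hc), inv_mul_eq_div, le_div_iff₀ hc] at key

end Kappa

lemma le_betaH {r m : ℕ} (Hb : Matrix (Fin r) (Fin m) ℝ) (j : Fin r) (k : Fin m) :
    Hb j k ≤ betaH Hb :=
  le_csSup (Set.finite_range _).bddAbove ⟨(j, k), rfl⟩

lemma betaH_nonneg {r m : ℕ} {Hb : Matrix (Fin r) (Fin m) ℝ} (hHb : ∀ j k, 0 ≤ Hb j k) :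
    0 ≤ betaH Hb :=
  Real.sSup_nonneg (by rintro _ ⟨_, rfl⟩; exact hHb _ _)

section Separable

variable {ρ μ ι : Type*} [DecidableEq ρ] (σ : ι ≃ ρ ⊕ μ) (Hbar : Matrix ρ μ ℝ)

/-- The paper's `H = [I, H̄] Π`. -/
def sepH : Matrix ρ ι ℝ := (fromCols 1 Hbar).submatrix id σ

/-- The paper's `X₀ = Πᵀ [I H̄; 0 0] Π`. -/
def sepX : Matrix ι ι ℝ := (fromBlocks 1 Hbar 0 0).submatrix σ σ

lemma sepH_apply_basis (j k : ρ) :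
    sepH σ Hbar k (σ.symm (.inl j)) = (1 : Matrix ρ ρ ℝ) k j := by
  simp [sepH]

lemma sepX_apply (u u' : ι) :
    sepX σ Hbar u u' = Sum.elim (fun j => sepH σ Hbar j u') 0 (σ u) := by
  rcases h : σ u with j | k <;> rcases h' : σ u' with j' | k' <;> simp [sepX, sepH, h, h']

lemma sepH_mul_sepX [Fintype ρ] [Fintype μ] [Fintype ι] :
    sepH σ Hbar * sepX σ Hbar = sepH σ Hbar := by
  rw [sepH, sepX, ← submatrix_mul _ _ _ _ _ σ.bijective, fromCols_mul_fromBlocks]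
  simp

variable {σ Hbar}

lemma sepH_nonneg (hHbar : ∀ j k, 0 ≤ Hbar j k) (j : ρ) (u : ι) : 0 ≤ sepH σ Hbar j u := by
  rcases h : σ u with j' | k
  · simp [sepH, h, one_apply, apply_ite]
  · simpa [sepH, h] using hHbar j k

lemma sepX_nonneg (hHbar : ∀ j k, 0 ≤ Hbar j k) (u u' : ι) : 0 ≤ sepX σ Hbar u u' := by
  rw [sepX_apply]
  rcases σ u with j | k
  · exact sepH_nonneg hHbar j u'
  · exact le_rfl

lemma sum_sepX_col [Fintype ρ] [Fintype μ] [Fintype ι] (hHcol : ∀ u, ∑ j, sepH σ Hbar j u = 1)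
    (u' : ι) : ∑ u, sepX σ Hbar u u' = 1 := by
  simp only [sepX_apply]
  rw [σ.sum_comp (Sum.elim (fun j => sepH σ Hbar j u') 0), Fintype.sum_sum_type]
  simp [hHcol]

lemma feas_sepX [Fintype ρ] [Fintype μ] [Fintype ι] [DecidableEq ι]
    (hHbar : ∀ j k, 0 ≤ Hbar j k) (hHcol : ∀ u, ∑ j, sepH σ Hbar j u = 1) :
    Feas (sepX σ Hbar) (Fintype.card ρ) := by
  have hdiag : ∀ j, sepX σ Hbar (σ.symm (.inl j)) (σ.symm (.inl j)) = 1 := fun j => by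
    simp [sepX_apply, sepH_apply_basis]
  have hH1 : ∀ j u, sepH σ Hbar j u ≤ 1 := fun j u =>
    hHcol u ▸ Finset.single_le_sum (fun k _ => sepH_nonneg hHbar k u) (Finset.mem_univ j)
  refine ⟨?_, fun u => ?_, sepX_nonneg hHbar, fun u u' => ?_⟩
  · simp only [trace, diag, ← σ.symm.sum_comp, Fintype.sum_sum_type, hdiag]
    simp [sepX_apply]
  · rw [sepX_apply]
    rcases σ u with j | k
    · exact hH1 j u
    · exact zero_le_one
  · obtain ⟨v, rfl⟩ := σ.symm.surjective u
    rcases v with j | k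
    · rw [hdiag, sepX_apply, Equiv.apply_symm_apply]; exact hH1 j u'
    · simp [sepX_apply]

lemma mul_sepH_apply_basis [Fintype ρ] {α : Type*} (W : Matrix α ρ ℝ) (i : α) (j : ρ) :
    (W * sepH σ Hbar) i (σ.symm (.inl j)) = W i j := by
  simp [mul_apply, sepH_apply_basis, one_apply]

lemma sepH_mulVec_le [Fintype ι] {b : ℝ} (hb0 : 0 ≤ b) {j : ρ} (hb : ∀ k, Hbar j k ≤ b)
    {x : ι → ℝ} (hx : ∀ u, 0 ≤ x u) :
    (sepH σ Hbar *ᵥ x) j ≤ x (σ.symm (.inl j)) + b * (∑ u, x u - x (σ.symm (.inl j))) := by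
  set u₀ := σ.symm (.inl j)
  have hoff : ∀ u ∈ Finset.univ.erase u₀, sepH σ Hbar j u * x u ≤ b * x u := by
    intro u hu
    refine mul_le_mul_of_nonneg_right ?_ (hx u)
    have hσu : σ u ≠ .inl j := fun h => Finset.ne_of_mem_erase hu (σ.eq_symm_apply.2 h)
    rcases h : σ u with j' | k
    · have hjj' : j ≠ j' := fun e => hσu (e ▸ h)
      simpa [sepH, h, one_apply, hjj'] using hb0
    · simpa [sepH, h] using hb k
  calc (sepH σ Hbar *ᵥ x) j
      = sepH σ Hbar j u₀ * x u₀ + ∑ u ∈ Finset.univ.erase u₀, sepH σ Hbar j u * x u :=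
        (Finset.add_sum_erase _ _ (Finset.mem_univ u₀)).symm
    _ ≤ x u₀ + ∑ u ∈ Finset.univ.erase u₀, b * x u := by
        rw [sepH_apply_basis, one_apply_eq, one_mul]; grw [Finset.sum_le_sum hoff]
    _ = x u₀ + b * (∑ u, x u - x u₀) := by
        rw [← Finset.mul_sum, ← Finset.sum_erase_add _ _ (Finset.mem_univ u₀),
          add_sub_cancel_right]

end Separable

/-- `t ≤ X + β (S - X)` turns `κ (1 - t) ≤ 3ε + εS` into
`κ (1 - β)(1 - X) ≤ 3ε + εS + κβ (S - 1)`; after multiplying by `1 - ε`, the bound on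
`(1 - ε) S` makes the right-hand side at most `4ε + 4κβε ≤ 8ε`. -/
lemma le_of_kappa_beta_bounds {κ β ε S t X : ℝ} (hκ : 0 < κ) (hκ1 : κ ≤ 1) (hβ0 : 0 ≤ β)
    (hβ1 : β < 1) (hε0 : 0 ≤ ε) (hε1 : ε < 1) (hS : (1 - ε) * S ≤ 1 + 3 * ε)
    (ht : κ * (1 - t) ≤ 3 * ε + ε * S) (htX : t ≤ X + β * (S - X)) :
    1 - 8 * ε / (κ * (1 - β) * (1 - ε)) ≤ X := by
  have hpos : 0 < κ * (1 - β) * (1 - ε) := by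
    have := sub_pos.2 hβ1; have := sub_pos.2 hε1; positivity
  rw [sub_le_comm, le_div_iff₀ hpos]
  have hκβ : κ * β ≤ 1 := mul_le_one₀ hκ1 hβ0 hβ1.le
  have h1 : κ * (1 - X) * (1 - β) ≤ 3 * ε + ε * S + κ * β * (S - 1) := by
    nlinarith [mul_le_mul_of_nonneg_left htX hκ.le]
  have h2 := mul_le_mul_of_nonneg_right h1 (sub_nonneg.2 hε1.le)
  nlinarith [mul_le_mul_of_nonneg_left hS hε0,
    mul_le_mul_of_nonneg_left hS (mul_nonneg hκ.le hβ0), mul_nonneg hε0 (sub_nonneg.2 hκβ)]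

/-- Diagonal entries of X_opt at basis indices are at least 1 − 8ε/(κ(1−β)(1−ε)). -/
theorem basis_diagonal_bound
    {d r m : ℕ} (W : Matrix (Fin d) (Fin r) ℝ) (Hbar : Matrix (Fin r) (Fin m) ℝ)
    (σ : Equiv.Perm (Fin r ⊕ Fin m))
    (N A V : Matrix (Fin d) (Fin r ⊕ Fin m) ℝ)
    (H : Matrix (Fin r) (Fin r ⊕ Fin m) ℝ) (ε : ℝ)
    (hW : ∀ i j, 0 ≤ W i j) (hHbar : ∀ i j, 0 ≤ Hbar i j)
    (hH : H = fun j u => Matrix.fromCols (1 : Matrix (Fin r) (Fin r) ℝ) Hbar j (σ u))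
    (hV : V = W * H) (hA : A = V + N)
    (hVcol : ∀ u, l1 (fun i => V i u) = 1)
    (hWcol : ∀ j, l1 (fun i => W i j) = 1)
    (hHcol : ∀ u, l1 (fun j => H j u) = 1)
    (hε0 : 0 ≤ ε) (hε1 : ε < 1) (hN : ml1 N ≤ ε)
    (Xopt : Matrix (Fin r ⊕ Fin m) (Fin r ⊕ Fin m) ℝ)
    (hfeas : Feas Xopt r)
    (hopt : ∀ X : Matrix (Fin r ⊕ Fin m) (Fin r ⊕ Fin m) ℝ,
      Feas X r → ml1 (A - A * Xopt) ≤ ml1 (A - A * X))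
    (hκ : 0 < kappa W) (hβ : betaH Hbar < 1) :
    ∀ j : Fin r,
      1 - 8 * ε / (kappa W * (1 - betaH Hbar) * (1 - ε)) ≤
        Xopt (σ.symm (Sum.inl j)) (σ.symm (Sum.inl j)) := by
  intro j
  obtain rfl : H = sepH σ Hbar := hH
  subst hV hA
  have : Nonempty (Fin r ⊕ Fin m) := ⟨.inl j⟩
  have hH0 := sepH_nonneg (σ := σ) hHbar
  have hHsum : ∀ u, ∑ k, sepH σ Hbar k u = 1 := fun u =>
    (l1_eq_sum_of_nonneg (hH0 · u)).symm.trans (hHcol u)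
  have hV0 : ∀ i u, 0 ≤ (W * sepH σ Hbar) i u := fun i u =>
    mul_apply (M := W) ▸ Finset.sum_nonneg fun k _ => mul_nonneg (hW i k) (hH0 k u)
  have hres : ml1 (W * sepH σ Hbar + N - (W * sepH σ Hbar + N) * Xopt) ≤ 2 * ε :=
    (hopt _ (by simpa using feas_sepX hHbar hHsum)).trans <|
      ml1_sub_mul_le_s7 (by rw [Matrix.mul_assoc, sepH_mul_sepX]) (sepX_nonneg hHbar)
        (sum_sepX_col hHsum) hN
  set u₀ := σ.symm (.inl j)
  set x : Fin r ⊕ Fin m → ℝ := fun u => Xopt u u₀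
  have hx : ∀ u, 0 ≤ x u := fun u => hfeas.2.2.1 u u₀
  have hres₀ : l1 (fun i => (W * sepH σ Hbar + N) i u₀ - ((W * sepH σ Hbar + N) *ᵥ x) i)
      ≤ 2 * ε := (l1_col_le_ml1 _ u₀).trans hres
  have hS := one_sub_mul_sum_le hV0 hVcol hN hx hres₀
  have hy : ∀ k, 0 ≤ (sepH σ Hbar *ᵥ x) k := fun k =>
    Finset.sum_nonneg (s := .univ) fun u _ => mul_nonneg (hH0 k u) (hx u)
  have ht := (kappa_mul_one_sub_le W j hy).trans
      (l1_col_sub_mulVec_le (mul_sepH_apply_basis W · j) hN hx hres₀)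
  have htX := sepH_mulVec_le (σ := σ) (betaH_nonneg hHbar) (le_betaH Hbar j) hx
  exact le_of_kappa_beta_bounds hκ ((kappa_le_l1_col W j).trans_eq (hWcol j))
    (betaH_nonneg hHbar) hβ hε0 hε1 hS ht htX
end
end
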